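/- Let f : R → R be a (not necessarily continuous) piecewise affine function with finitely many break points, all contained in a compact set K₀, and let X be a real random variable with law P_X. Let \hat{X} be a cell-wise stationary Voronoi quantization of X on a grid Γ = {x_1,…,x_N} with cells C_i. Then |E[f(X)] − E[f(\hat{X})]| ≤ 2 ℓ ‖f‖_{∞,K₀} max_{i ∈ J} P_X(C_i), where J is the set of indices of cells meeting the break points, ℓ is the number of break points, and ‖f‖_{∞,K₀} = sup_{K₀} |f|, provided the union of the cells with indices in J is contained in K₀. -/

import Mathlib

/-!
Split `E f(X) - E f(X̂)` cell by cell into `∫_{C i} f dμ - f(x i) μ(C i)`. On a cell without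
break points `f` is affine, and stationarity `∫_{C i} ξ dμ = x i μ(C i)` makes the term vanish.
The remaining cells are those containing a break point; there are at most `ℓ` of them, and on
each the term is at most `2 M μ(C i) ≤ 2 M B`.
-/

open MeasureTheory Classical Finset

section Cell

variable {μ : Measure ℝ} {s : Set ℝ} {c : ℝ}

theorem setIntegral_id_eq_mul_measureReal_of_setIntegral_sub_eq_zero (hs : μ s ≠ ⊤)
    (hid : IntegrableOn (fun ξ : ℝ => ξ) s μ) (hstat : ∫ ξ in s, (ξ - c) ∂μ = 0) :
    ∫ ξ in s, ξ ∂μ = c * μ.real s := by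
  rw [integral_sub hid (integrableOn_const hs), setIntegral_const, smul_eq_mul,
    sub_eq_zero] at hstat
  rw [hstat, mul_comm]

theorem setIntegral_eq_mul_measureReal_of_eqOn_affine (hmeas : MeasurableSet s)
    (hs : μ s ≠ ⊤) (hid : IntegrableOn (fun ξ : ℝ => ξ) s μ)
    (hstat : ∫ ξ in s, (ξ - c) ∂μ = 0) (hc : c ∈ s) {f : ℝ → ℝ} {α β : ℝ}
    (hf : ∀ ξ ∈ s, f ξ = α * ξ + β) :
    ∫ ξ in s, f ξ ∂μ = f c * μ.real s := by
  rw [setIntegral_congr_fun hmeas hf, integral_add (hid.const_mul α) (integrableOn_const hs),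
    integral_const_mul, setIntegral_const, smul_eq_mul,
    setIntegral_id_eq_mul_measureReal_of_setIntegral_sub_eq_zero hs hid hstat, hf c hc]
  ring

end Cell

theorem abs_setIntegral_sub_mul_measureReal_le {X : Type*} [MeasurableSpace X] {μ : Measure X}
    {s : Set X} {c : X} {f : X → ℝ} {M : ℝ} (hs : μ s ≠ ⊤) (hc : c ∈ s)
    (hM : ∀ ξ ∈ s, |f ξ| ≤ M) :
    |∫ ξ in s, f ξ ∂μ - f c * μ.real s| ≤ 2 * M * μ.real s := by
  have hint : |∫ ξ in s, f ξ ∂μ| ≤ M * μ.real s :=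
    norm_setIntegral_le_of_norm_le_const hs.lt_top fun ξ hξ =>
      (Real.norm_eq_abs _).trans_le (hM ξ hξ)
  have hpt : |f c * μ.real s| ≤ M * μ.real s := by
    rw [abs_mul, abs_of_nonneg measureReal_nonneg]
    exact mul_le_mul_of_nonneg_right (hM c hc) measureReal_nonneg
  linarith [abs_sub (∫ ξ in s, f ξ ∂μ) (f c * μ.real s)]

theorem integral_sub_sum_eq_sum_setIntegral_sub {X ι : Type*} [MeasurableSpace X]
    [Fintype ι] {μ : Measure X} [IsFiniteMeasure μ] {C : ι → Set X}
    (hmeas : ∀ i, MeasurableSet (C i)) (hdisj : Pairwise (Function.onFun Disjoint C))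
    (hcover : ⋃ i, C i = Set.univ) {f : X → ℝ} (hf : Integrable f μ) (x : ι → X) :
    ∫ ξ, f ξ ∂μ - ∑ i, f (x i) * μ.real (C i)
      = ∑ i, (∫ ξ in C i, f ξ ∂μ - f (x i) * μ.real (C i)) := by
  rw [sum_sub_distrib, ← integral_iUnion_fintype hmeas hdisj (fun _ => hf.integrableOn),
    hcover, setIntegral_univ]

theorem Finset.card_filter_exists_mem_le {X ι κ : Type*} [Fintype ι] [Fintype κ]
    {C : ι → Set X} (hdisj : Pairwise (Function.onFun Disjoint C)) (a : κ → X)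
    [DecidablePred fun i => ∃ k, a k ∈ C i] :
    #{i | ∃ k, a k ∈ C i} ≤ Fintype.card κ :=
  card_le_card_of_forall_subsingleton (fun i k => a k ∈ C i)
    (fun i hi => by simpa using (mem_filter.mp hi).2)
    (fun k _ i hi j hj => by_contra fun hij => (hdisj hij).ne_of_mem hi.2 hj.2 rfl)

theorem stmt8_general (μ : Measure ℝ) [IsProbabilityMeasure μ] {N ℓ : ℕ} (hℓ : 0 < ℓ)
    (x : Fin N → ℝ) (C : Fin N → Set ℝ)
    (hCmeas : ∀ i, MeasurableSet (C i))
    (hdisj : Pairwise (Function.onFun Disjoint C))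
    (hcover : (⋃ i, C i) = Set.univ)
    (hx : ∀ i, x i ∈ C i)
    (hstat : ∀ i, ∫ ξ in C i, (ξ - x i) ∂μ = 0)
    (a : Fin ℓ → ℝ) (hamono : StrictMono a)
    (f : ℝ → ℝ)
    (haff : ∀ i, (∀ k, a k ∉ C i) → ∃ α β : ℝ, ∀ ξ ∈ C i, f ξ = α * ξ + β)
    (K₀ : Set ℝ)
    (hJK : ∀ i ∈ Finset.univ.filter
        (fun i => (C i ∩ Set.Icc (a ⟨0, hℓ⟩) (a ⟨ℓ - 1, Nat.sub_lt hℓ one_pos⟩)).Nonempty),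
      C i ⊆ K₀)
    (M : ℝ) (hM0 : 0 ≤ M) (hM : ∀ ξ ∈ K₀, |f ξ| ≤ M)
    (hintf : Integrable f μ) (hintid : Integrable (fun ξ : ℝ => ξ) μ) :
    ∀ B : ℝ, 0 ≤ B →
      (∀ i ∈ Finset.univ.filter
          (fun i => (C i ∩ Set.Icc (a ⟨0, hℓ⟩) (a ⟨ℓ - 1, Nat.sub_lt hℓ one_pos⟩)).Nonempty),
        (μ (C i)).toReal ≤ B) →
      |(∫ ξ, f ξ ∂μ) - ∑ i, f (x i) * (μ (C i)).toReal| ≤ 2 * ℓ * M * B := by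
  intro B hB hBle
  set breakCells : Finset (Fin N) := {i | ∃ k, a k ∈ C i}
  have hbreakCells : ∀ i ∈ breakCells, C i ⊆ K₀ ∧ μ.real (C i) ≤ B := by
    intro i hi
    obtain ⟨k, hk⟩ := (mem_filter.mp hi).2
    have hiJ : i ∈ univ.filter fun i =>
        (C i ∩ Set.Icc (a ⟨0, hℓ⟩) (a ⟨ℓ - 1, Nat.sub_lt hℓ one_pos⟩)).Nonempty :=
      mem_filter.mpr ⟨mem_univ i, a k, hk,
        hamono.monotone (Nat.zero_le k), hamono.monotone (Nat.le_sub_one_of_lt k.isLt)⟩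
    exact ⟨hJK i hiJ, hBle i hiJ⟩
  have hzero : ∀ i ∉ breakCells, ∫ ξ in C i, f ξ ∂μ - f (x i) * μ.real (C i) = 0 := by
    intro i hi
    obtain ⟨α, β, hαβ⟩ := haff i fun k hk => hi (mem_filter.mpr ⟨mem_univ i, k, hk⟩)
    rw [sub_eq_zero]
    exact setIntegral_eq_mul_measureReal_of_eqOn_affine (hCmeas i) (measure_ne_top μ _)
      hintid.integrableOn (hstat i) (hx i) hαβ
  have hbound :
      ∀ i ∈ breakCells, |∫ ξ in C i, f ξ ∂μ - f (x i) * μ.real (C i)| ≤ 2 * M * B := by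
    intro i hi
    obtain ⟨hK, hμB⟩ := hbreakCells i hi
    exact (abs_setIntegral_sub_mul_measureReal_le (measure_ne_top μ _) (hx i)
      fun ξ hξ => hM ξ (hK hξ)).trans (by gcongr)
  calc |(∫ ξ, f ξ ∂μ) - ∑ i, f (x i) * μ.real (C i)|
      = |∑ i ∈ breakCells, (∫ ξ in C i, f ξ ∂μ - f (x i) * μ.real (C i))| := by
        rw [integral_sub_sum_eq_sum_setIntegral_sub hCmeas hdisj hcover hintf,
          sum_subset (subset_univ breakCells) fun i _ hi => hzero i hi]
    _ ≤ #breakCells • (2 * M * B) :=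
        (abs_sum_le_sum_abs _ _).trans (sum_le_card_nsmul _ _ _ hbound)
    _ ≤ ℓ • (2 * M * B) := nsmul_le_nsmul_left (by positivity)
        ((card_filter_exists_mem_le hdisj a).trans_eq (Fintype.card_fin ℓ))
    _ = 2 * ℓ * M * B := by rw [nsmul_eq_mul]; ring

/-- for a (possibly discontinuous) piecewise affine function `f` with break
points `a_1 < ⋯ < a_ℓ` all contained in a compact set `K₀`, and a cell-wise stationary
Voronoi quantization with cells `C i`, if the union of the cells meeting `[a_1, a_ℓ]`
(whose index set `J` has at most `2ℓ` elements) is contained in `K₀`, then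
`|E[f(X)] − E[f(X̂)]| ≤ 2 ℓ ‖f‖_{∞,K₀} max_{i ∈ J} μ(C i)`. -/
theorem stmt8 (μ : Measure ℝ) [IsProbabilityMeasure μ] {N ℓ : ℕ} (hℓ : 0 < ℓ)
    (x : Fin N → ℝ) (C : Fin N → Set ℝ)
    (hCmeas : ∀ i, MeasurableSet (C i))
    (hdisj : Pairwise (Function.onFun Disjoint C))
    (hcover : (⋃ i, C i) = Set.univ)
    (hx : ∀ i, x i ∈ C i)
    (hstat : ∀ i, ∫ ξ in C i, (ξ - x i) ∂μ = 0)
    (a : Fin ℓ → ℝ) (hamono : StrictMono a)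
    (f : ℝ → ℝ)
    (haff : ∀ i, (∀ k, a k ∉ C i) → ∃ α β : ℝ, ∀ ξ ∈ C i, f ξ = α * ξ + β)
    (K₀ : Set ℝ) (hK₀ : IsCompact K₀)
    (hJK : ∀ i ∈ Finset.univ.filter
        (fun i => (C i ∩ Set.Icc (a ⟨0, hℓ⟩) (a ⟨ℓ - 1, Nat.sub_lt hℓ one_pos⟩)).Nonempty),
      C i ⊆ K₀)
    (hJcard : (Finset.univ.filter
        (fun i => (C i ∩ Set.Icc (a ⟨0, hℓ⟩) (a ⟨ℓ - 1, Nat.sub_lt hℓ one_pos⟩)).Nonempty)).card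
        ≤ 2 * ℓ)
    (M : ℝ) (hM0 : 0 ≤ M) (hM : ∀ ξ ∈ K₀, |f ξ| ≤ M)
    (hintf : Integrable f μ) (hintid : Integrable (fun ξ : ℝ => ξ) μ) :
    ∀ B : ℝ, 0 ≤ B →
      (∀ i ∈ Finset.univ.filter
          (fun i => (C i ∩ Set.Icc (a ⟨0, hℓ⟩) (a ⟨ℓ - 1, Nat.sub_lt hℓ one_pos⟩)).Nonempty),
        (μ (C i)).toReal ≤ B) →
      |(∫ ξ, f ξ ∂μ) - ∑ i, f (x i) * (μ (C i)).toReal| ≤ 2 * ℓ * M * B :=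
  stmt8_general μ hℓ x C hCmeas hdisj hcover hx hstat a hamono f haff K₀ hJK M hM0 hM hintf hintid
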